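/- Let P = (p_v)_{v ∈ V} be a compatible family of V-partitions and u, v distinct elements of V. Then {u, v} ∈ E_P (i.e., p_w[u] = p_w[v] holds for all w ∈ V − {u,v}) if and only if p_v[u] is a minimal element (with respect to inclusion) of the collection {p_w[u] : w ∈ V − {u}}. -/

import Mathlib

/-- A compatible family of `V`-partitions: for each `v ∈ V` a partition of `V`,
recorded via its block function `blk v u` = the block of the partition `p_v`
containing `u`, such that `p_v[u] ∪ p_u[v] = V` for all distinct `u, v`, and
`{v} ∈ p_v` for all `v`. -/
structure CompFam (V : Type*) where
  blk : V → V → Set V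
  mem_self : ∀ v u, u ∈ blk v u
  eq_of_mem : ∀ v u w, w ∈ blk v u → blk v w = blk v u
  self_blk : ∀ v, blk v v = {v}
  compat : ∀ u v : V, u ≠ v → blk v u ∪ blk u v = Set.univ

/-- The graph `B_P = (V, E_P)` associated to a compatible family `P`:
`{u,v} ∈ E_P` iff `p_w[u] = p_w[v]` for all `w ∈ V − {u,v}`. -/
def BP {V : Type*} (P : CompFam V) : SimpleGraph V where
  Adj u v := u ≠ v ∧ ∀ w, w ≠ u → w ≠ v → P.blk w u = P.blk w v
  symm := ⟨fun u v h => ⟨h.1.symm, fun w h1 h2 => (h.2 w h2 h1).symm⟩⟩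
  loopless := ⟨fun u h => h.1 rfl⟩

/-! Since `v ∈ p_v[u]` only for `u = v`, an edge `{u, v}` makes `p_v[u]` minimal: a block
`p_w[u] ⊆ p_v[u]` with `w ≠ v` would contain `p_w[v] ∋ v`. Conversely, if `p_w[u] ≠ p_w[v]`
for some `w ∉ {u, v}`, then `p_w[u]` misses `p_w[v]`, so compatibility of `w` and `v` puts it
inside `p_v[w] = p_v[u]`; minimality then gives `w ∈ p_v[u] = p_w[u]`, forcing `u = w`. -/

namespace CompFam

variable {V : Type*} (P : CompFam V) {u v w : V}

theorem blk_eq_blk_of_mem (h : w ∈ P.blk v u) : P.blk v u = P.blk v w :=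
  (P.eq_of_mem v u w h).symm

theorem blk_eq_blk_iff : P.blk v u = P.blk v w ↔ w ∈ P.blk v u :=
  ⟨fun h => h ▸ P.mem_self v w, P.blk_eq_blk_of_mem⟩

theorem mem_blk_comm : w ∈ P.blk v u ↔ u ∈ P.blk v w := by
  rw [← blk_eq_blk_iff, ← blk_eq_blk_iff, eq_comm]

theorem mem_blk_self_iff : v ∈ P.blk v u ↔ u = v := by
  rw [mem_blk_comm, self_blk, Set.mem_singleton_iff]

theorem disjoint_blk_of_notMem (h : v ∉ P.blk w u) : Disjoint (P.blk w u) (P.blk w v) :=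
  Set.disjoint_left.2 fun _ hxu hxv =>
    h (P.blk_eq_blk_iff.1 ((P.blk_eq_blk_of_mem hxu).trans (P.blk_eq_blk_of_mem hxv).symm))

theorem compl_blk_subset (h : u ≠ v) : (P.blk u v)ᶜ ⊆ P.blk v u :=
  Set.compl_subset_iff_union.2 (Set.union_comm _ _ ▸ P.compat u v h)

theorem blk_eq_blk_of_minimal
    (hmin : ∀ w, w ≠ u → P.blk w u ⊆ P.blk v u → P.blk w u = P.blk v u)
    (hwu : w ≠ u) (hwv : w ≠ v) : P.blk w u = P.blk w v := by
  by_contra hne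
  have hdisj : Disjoint (P.blk w u) (P.blk w v) :=
    P.disjoint_blk_of_notMem fun hv => hne (P.blk_eq_blk_iff.2 hv)
  have hvw : P.blk v w = P.blk v u :=
    P.blk_eq_blk_of_mem (P.compl_blk_subset hwv (hdisj.notMem_of_mem_left (P.mem_self w u)))
  have hsub : P.blk w u ⊆ P.blk v u :=
    hvw ▸ hdisj.subset_compl_right.trans (P.compl_blk_subset hwv)
  have hw : w ∈ P.blk w u := hmin w hwu hsub ▸ hvw ▸ P.mem_self v w
  exact hwu (P.mem_blk_self_iff.1 hw).symm

end CompFam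

theorem edge_iff_minimal_general {V : Type*} (P : CompFam V) (u v : V) (huv : u ≠ v) :
    (∀ w : V, w ≠ u → w ≠ v → P.blk w u = P.blk w v) ↔
      (∀ w : V, w ≠ u → P.blk w u ⊆ P.blk v u → P.blk w u = P.blk v u) := by
  refine ⟨fun hedge w hwu hsub => ?_, fun hmin w => P.blk_eq_blk_of_minimal hmin⟩
  obtain rfl | hwv := eq_or_ne w v
  · rfl
  have hv : v ∈ P.blk v u := hsub (hedge w hwu hwv ▸ P.mem_self w v)
  exact absurd (P.mem_blk_self_iff.1 hv) huv

theorem edge_iff_minimal {V : Type*} [Fintype V] (P : CompFam V) (u v : V) (huv : u ≠ v) :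
    (∀ w : V, w ≠ u → w ≠ v → P.blk w u = P.blk w v) ↔
      (∀ w : V, w ≠ u → P.blk w u ⊆ P.blk v u → P.blk w u = P.blk v u) :=
  edge_iff_minimal_general P u v huv
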